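/- arXiv:math/0003161 — 3 statements merged into one kernel-verified Lean document; each statement's English description precedes it below -/
import Mathlib

section
/- Fix integers n ≥ 2 and l ≥ 1, and let B_l = {(x_1,…,x_n, x_0, x̄_n,…,x̄_1) : x_i, x̄_i ∈ ℤ_{≥0}, x_0 ∈ {0,1}, x_0 + Σ_{i=1}^n (x_i + x̄_i) ≤ l}; for b ∈ B_l set x_∅ = l − x_0 − Σ_{i=1}^n (x_i + x̄_i). Then the map t : B_l → ℤ_{≥0}^{2n} defined by t(b) = (2x_n + x_0, x_{n−1}, …, x_1, x_∅, x̄_1, …, x̄_{n−1}) is injective. -/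
set_option maxHeartbeats 1000000 in
/-- Type `D^{(2)}_{n+1}`: the map
`t(b) = (2x_n + x_0, x_{n-1}, …, x_1, x_∅, x̄_1, …, x̄_{n-1})`, where
`x_∅ = l - x_0 - Σ_i (x_i + x̄_i)`, is injective on
`B_l = {(x, x_0, x̄) : x_i, x̄_i ∈ ℤ_{≥0}, x_0 ∈ {0,1}, x_0 + Σ_i (x_i + x̄_i) ≤ l}`.
(`b.1.1 j` is `x_{j+1}`, `b.1.2.1` is `x_0`, `b.1.2.2 j` is `x̄_{j+1}`,
zero-indexed; the component `k : Fin (2n)` of `t` is `2x_n + x_0` for `k = 0`,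
`x_{n-k}` for `1 ≤ k < n`, `x_∅` for `k = n`, and `x̄_{k-n}` for `k > n`.) -/
theorem stmt6 (n l : ℕ) (hn : 2 ≤ n) (hl : 1 ≤ l) :
    Function.Injective
      (fun b : {p : (Fin n → ℕ) × ℕ × (Fin n → ℕ) //
          p.2.1 ≤ 1 ∧ p.2.1 + ((∑ i, p.1 i) + ∑ i, p.2.2 i) ≤ l} =>
        (fun k : Fin (2 * n) =>
          if h0 : (k : ℕ) = 0 then 2 * b.1.1 ⟨n - 1, by omega⟩ + b.1.2.1
          else if h : (k : ℕ) < n then b.1.1 ⟨n - 1 - (k : ℕ), by omega⟩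
          else if h2 : (k : ℕ) = n then
            l - b.1.2.1 - ((∑ i, b.1.1 i) + ∑ i, b.1.2.2 i)
          else b.1.2.2 ⟨(k : ℕ) - n - 1, by have := k.isLt; omega⟩)) := by
  rintro ⟨⟨x, x0, y⟩, hx0, hs⟩ ⟨⟨x', x0', y'⟩, hx0', hs'⟩ h
  simp only at h hx0 hx0' hs hs'
  have hs2 : x0 + ((∑ i, x i) + ∑ i, y i) ≤ l := hs
  have hs2' : x0' + ((∑ i, x' i) + ∑ i, y' i) ≤ l := hs'
  -- equation from component 0
  have E0 := congrFun h ⟨0, by omega⟩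
  simp only [dif_pos rfl, dite_true] at E0
  -- x_i for i < n-1
  have Ex : ∀ i : Fin n, (i : ℕ) < n - 1 → x i = x' i := by
    intro i hi
    have E := congrFun h ⟨n - 1 - (i : ℕ), by omega⟩
    have h1 : ¬ ((⟨n - 1 - (i : ℕ), by omega⟩ : Fin (2 * n)) : ℕ) = 0 := by
      simp only [Fin.val_mk]; omega
    have h2 : ((⟨n - 1 - (i : ℕ), by omega⟩ : Fin (2 * n)) : ℕ) < n := by
      simp only [Fin.val_mk]; omega
    simp only [dif_neg h1, dif_pos h2] at E
    have hfin : (⟨n - 1 - (n - 1 - (i : ℕ)), by omega⟩ : Fin n) = i := by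
      apply Fin.ext; simp only [Fin.val_mk]; omega
    rwa [hfin] at E
  -- y_i for i < n-1
  have Ey : ∀ i : Fin n, (i : ℕ) < n - 1 → y i = y' i := by
    intro i hi
    have E := congrFun h ⟨n + 1 + (i : ℕ), by omega⟩
    have h1 : ¬ ((⟨n + 1 + (i : ℕ), by omega⟩ : Fin (2 * n)) : ℕ) = 0 := by
      simp only [Fin.val_mk]; omega
    have h2 : ¬ ((⟨n + 1 + (i : ℕ), by omega⟩ : Fin (2 * n)) : ℕ) < n := by
      simp only [Fin.val_mk]; omega
    have h3 : ¬ ((⟨n + 1 + (i : ℕ), by omega⟩ : Fin (2 * n)) : ℕ) = n := by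
      simp only [Fin.val_mk]; omega
    simp only [dif_neg h1, dif_neg h2, dif_neg h3] at E
    have hfin : (⟨n + 1 + (i : ℕ) - n - 1, by omega⟩ : Fin n) = i := by
      apply Fin.ext; simp only [Fin.val_mk]; omega
    rwa [hfin] at E
  -- component n
  have En := congrFun h ⟨n, by omega⟩
  have h1 : ¬ ((⟨n, by omega⟩ : Fin (2 * n)) : ℕ) = 0 := by
    simp only [Fin.val_mk]; omega
  have h2 : ¬ ((⟨n, by omega⟩ : Fin (2 * n)) : ℕ) < n := by
    simp only [Fin.val_mk]; omega
  have h3 : ((⟨n, by omega⟩ : Fin (2 * n)) : ℕ) = n := rfl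
  simp only [dif_neg h1, dif_neg h2, dif_pos h3, dite_true, dite_false] at En
  -- x_{n-1} and x0 from E0
  have hxl : x ⟨n - 1, by omega⟩ = x' ⟨n - 1, by omega⟩ ∧ x0 = x0' := by
    constructor <;> omega
  -- x = x'
  have hx : x = x' := by
    funext i
    rcases Nat.lt_or_ge (i : ℕ) (n - 1) with hi | hi
    · exact Ex i hi
    · have hieq : i = ⟨n - 1, by omega⟩ := by
        apply Fin.ext; have := i.isLt; simp only [Fin.val_mk]; omega
      rw [hieq]; exact hxl.1
  -- sums equal
  have hsx : ∑ i, x i = ∑ i, x' i := by rw [hx]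
  have hSy : ∑ i, y i = ∑ i, y' i := by omega
  -- y = y'
  have hy : y = y' := by
    obtain ⟨m, rfl⟩ : ∃ m, n = m + 1 := ⟨n - 1, by omega⟩
    rw [Fin.sum_univ_castSucc, Fin.sum_univ_castSucc] at hSy
    have hcs : ∀ i : Fin m, y i.castSucc = y' i.castSucc := by
      intro i
      exact Ey i.castSucc (by simpa using i.isLt)
    have hsum : ∑ i : Fin m, y i.castSucc = ∑ i : Fin m, y' i.castSucc :=
      Finset.sum_congr rfl fun i _ => hcs i
    have hlast : y (Fin.last m) = y' (Fin.last m) := by omega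
    funext i
    induction i using Fin.lastCases with
    | last => exact hlast
    | cast i => exact hcs i
  simp only [Subtype.mk_eq_mk, Prod.mk.injEq]
  exact ⟨hx, hxl.2, hy⟩
end

section
/- Fix integers n ≥ 1 and l ≥ 1. The composite σ' = S_n ∘ S_{n−1} ∘ ⋯ ∘ S_2 ∘ S_1 (with S_1 applied first) is a bijection of B_l, it is given explicitly by σ'(x_1,…,x_{n+1}) = (x_2,…,x_{n+1},x_1), and for every i ∈ {0,1,…,n} it satisfies σ' ∘ f̃_i = f̃_{σ(i)} ∘ σ' and σ' ∘ ẽ_i = ẽ_{σ(i)} ∘ σ' as partial maps, where σ(i) is the unique element of {0,…,n} congruent to i − 1 modulo n+1. -/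
/-- Iterated application of a partial map: `OptIter g m a` is `g^m a`. -/
def OptIter {α : Type} (g : α → Option α) : ℕ → α → Option α
  | 0, a => some a
  | m + 1, a => (g a).bind (OptIter g m)

/-- Apply the partial maps `g 1`, `g 2`, ..., `g m` in this order. -/
def ChainOpt {α : Type} (g : ℕ → α → Option α) (m : ℕ) (a : α) : Option α :=
  (List.range m).foldl (fun acc j => acc.bind (g (j + 1))) (some a)

/-- A set with partial Kashiwara-type operators indexed by `{0, 1, ..., n}`. -/
structure PreCrystal (n : ℕ) where
  carrier : Type
  e : Fin (n + 1) → carrier → Option carrier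
  f : Fin (n + 1) → carrier → Option carrier

namespace PreCrystal

variable {n : ℕ}

/-- `ε_i(b) = max {m ≥ 0 : ẽ_i^m b is defined}`. -/
noncomputable def eps (C : PreCrystal n) (i : Fin (n + 1)) (b : C.carrier) : ℕ :=
  sSup {m | OptIter (C.e i) m b ≠ none}

/-- `φ_i(b) = max {m ≥ 0 : f̃_i^m b is defined}`. -/
noncomputable def phi (C : PreCrystal n) (i : Fin (n + 1)) (b : C.carrier) : ℕ :=
  sSup {m | OptIter (C.f i) m b ≠ none}

/-- `ẽ_i^max b = ẽ_i^{ε_i(b)} b`. -/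
noncomputable def eMax (C : PreCrystal n) (i : Fin (n + 1)) (b : C.carrier) : Option C.carrier :=
  OptIter (C.e i) (C.eps i b) b

/-- The Weyl group operator `S_i`: `f̃_i^{φ_i(b)-ε_i(b)} b` if `φ_i(b) ≥ ε_i(b)`,
and `ẽ_i^{ε_i(b)-φ_i(b)} b` if `φ_i(b) ≤ ε_i(b)`. -/
noncomputable def S (C : PreCrystal n) (i : Fin (n + 1)) (b : C.carrier) : Option C.carrier :=
  if C.eps i b ≤ C.phi i b then OptIter (C.f i) (C.phi i b - C.eps i b) b
  else OptIter (C.e i) (C.eps i b - C.phi i b) b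

/-- The tensor product `C ⊗ D` of two crystals, with the Kashiwara tensor product rule. -/
noncomputable def tensor (C D : PreCrystal n) : PreCrystal n where
  carrier := C.carrier × D.carrier
  e := fun i p =>
    if D.eps i p.2 ≤ C.phi i p.1 then (C.e i p.1).map (fun b => (b, p.2))
    else (D.e i p.2).map (fun b => (p.1, b))
  f := fun i p =>
    if D.eps i p.2 < C.phi i p.1 then (C.f i p.1).map (fun b => (b, p.2))
    else (D.f i p.2).map (fun b => (p.1, b))

end PreCrystal

/-- Kashiwara raising operator `ẽ_i` of type `A_n^{(1)}` on `(n+1)`-tuples of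
nonnegative integers (zero-indexed: coordinate `j` is `x_{j+1}`): defined iff the
coordinate at index `i` is positive, it adds 1 at index `i-1` (cyclically) and
subtracts 1 at index `i`. -/
def eA (n : ℕ) (i : Fin (n + 1)) (x : Fin (n + 1) → ℕ) : Option (Fin (n + 1) → ℕ) :=
  if 0 < x i then
    some (Function.update (Function.update x (i - 1) (x (i - 1) + 1)) i (x i - 1))
  else none

/-- Kashiwara lowering operator `f̃_i` of type `A_n^{(1)}`: defined iff the coordinate
at index `i-1` is positive, it subtracts 1 at index `i-1` and adds 1 at index `i`. -/
def fA (n : ℕ) (i : Fin (n + 1)) (x : Fin (n + 1) → ℕ) : Option (Fin (n + 1) → ℕ) :=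
  if 0 < x (i - 1) then
    some (Function.update (Function.update x i (x i + 1)) (i - 1) (x (i - 1) - 1))
  else none

/-- The crystal operators of type `A_n^{(1)}` on all `(n+1)`-tuples; the crystal `B_l`
is the subset of tuples with coordinate sum `l`. -/
def BA (n : ℕ) : PreCrystal n where
  carrier := Fin (n + 1) → ℕ
  e := eA n
  f := fA n

/-- The unique element of `{0, ..., n}` congruent to `-k` modulo `n+1`. -/
def negIdx (n : ℕ) (k : ℤ) : Fin (n + 1) :=
  ⟨((-k) % ((n : ℤ) + 1)).toNat, by
    have h1 := Int.emod_nonneg (-k) (by omega : ((n : ℤ) + 1) ≠ 0)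
    have h2 := Int.emod_lt_of_pos (-k) (by omega : (0 : ℤ) < (n : ℤ) + 1)
    omega⟩

/-- The cyclic shift `σ : (x_1, ..., x_{n+1}) ↦ (x_2, ..., x_{n+1}, x_1)`. -/
def shiftA (n : ℕ) (x : Fin (n + 1) → ℕ) : Fin (n + 1) → ℕ := fun j => x (j + 1)

/-- The map `t(x_1, ..., x_{n+1}) = (x_n, x_{n-1}, ..., x_1)`. -/
def tA (n : ℕ) (x : Fin (n + 1) → ℕ) : Fin n → ℕ :=
  fun k => x ⟨n - 1 - (k : ℕ), by omega⟩

/-- The `(N+1)`-fold tensor power `B ⊗ ... ⊗ B`, associated to the left. -/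
noncomputable def BPow (n : ℕ) : ℕ → PreCrystal n
  | 0 => BA n
  | N + 1 => (BPow n N).tensor (BA n)

/-- The element `b_1 ⊗ ... ⊗ b_{N+1}` of the `(N+1)`-fold tensor power. -/
noncomputable def tensorOf (n : ℕ) : (N : ℕ) → (Fin (N + 1) → (Fin (n + 1) → ℕ)) → (BPow n N).carrier
  | 0, b => b 0
  | N + 1, b => (tensorOf n N (fun j => b j.castSucc), b (Fin.last (N + 1)))

/-- Membership in `B_{l_1} ⊗ ... ⊗ B_{l_{N+1}}`: each factor has coordinate sum `l_j`. -/
def memBPow (n : ℕ) : (N : ℕ) → (Fin (N + 1) → ℕ) → (BPow n N).carrier → Prop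
  | 0, l, x => ∑ j, x j = l 0
  | N + 1, l, p => memBPow n N (fun j => l j.castSucc) p.1 ∧ ∑ j, p.2 j = l (Fin.last (N + 1))

/-- The componentwise cyclic shift `σ_B = σ ⊗ ... ⊗ σ` on a tensor power. -/
noncomputable def shiftPow (n : ℕ) : (N : ℕ) → (BPow n N).carrier → (BPow n N).carrier
  | 0, x => shiftA n x
  | N + 1, p => (shiftPow n N p.1, shiftA n p.2)


/-!
On `B_l` one has `ε_i(x) = x_{i+1}` and `φ_i(x) = x_i`, so `S_i` moves the excess of one of
these coordinates over the other across, i.e. it exchanges `x_i` and `x_{i+1}`. Hence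
`S_n ∘ ⋯ ∘ S_1` permutes the coordinates by the product of adjacent transpositions
`(1 2)(2 3)⋯(n n+1)`, the cycle `(1 2 ⋯ n+1)`, which is the cyclic shift. Both `ẽ_i` and `f̃_i`
move one unit between the cyclically adjacent coordinates `i, i+1`, and relabelling the
coordinates by the shift turns this pair into `i-1, i`.
-/

section Transfer

variable {ι : Type} [DecidableEq ι]

def transfer (a b : ι) (k : ℕ) (x : ι → ℕ) : ι → ℕ :=
  Function.update (Function.update x a (x a + k)) b (x b - k)

-- `eA n i` is `transferOne (i - 1) i` and `fA n i` is `transferOne i (i - 1)` by definition.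
def transferOne (a b : ι) (x : ι → ℕ) : Option (ι → ℕ) :=
  if 0 < x b then some (transfer a b 1 x) else none

lemma transfer_transfer_one (a b : ι) (k : ℕ) (x : ι → ℕ) :
    transfer a b k (transfer a b 1 x) = transfer a b (k + 1) x := by
  funext j
  simp only [transfer, Function.update_apply]
  grind

lemma optIter_transferOne (a b : ι) (m : ℕ) (x : ι → ℕ) :
    OptIter (transferOne a b) m x = if m ≤ x b then some (transfer a b m x) else none := by
  induction m generalizing x with
  | zero => simp [OptIter, transfer]
  | succ m ih =>
    have hb : transfer a b 1 x b = x b - 1 := by simp [transfer]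
    by_cases hx : 0 < x b
    · simp only [OptIter, transferOne, if_pos hx, Option.bind_some, ih, hb,
        transfer_transfer_one, Nat.le_sub_iff_add_le hx]
    · have hnone : transferOne a b x = none := if_neg hx
      rw [OptIter, hnone, Option.bind_none, if_neg (by omega)]

lemma sSup_optIter_transferOne_ne_none (a b : ι) (x : ι → ℕ) :
    sSup {m | OptIter (transferOne a b) m x ≠ none} = x b := by
  have : {m | OptIter (transferOne a b) m x ≠ none} = Set.Iic (x b) := by
    ext m
    simp [optIter_transferOne]
  rw [this, csSup_Iic]

lemma transfer_eq_comp_swap {a b : ι} {x : ι → ℕ} (h : x a ≤ x b) :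
    transfer a b (x b - x a) x = x ∘ Equiv.swap a b := by
  rw [Equiv.comp_swap_eq_update]
  funext j
  simp only [transfer, Function.update_apply]
  grind

end Transfer

lemma Fin.cycleRange_castSucc_mul_swap {m : ℕ} (i : Fin m) :
    i.castSucc.cycleRange * Equiv.swap i.castSucc i.succ = i.succ.cycleRange := by
  have hi : i.castSucc < i.succ := i.castSucc_lt_succ
  ext j
  rw [Equiv.Perm.mul_apply]
  rcases lt_trichotomy j i.castSucc with hj | rfl | hj
  · rw [Equiv.swap_apply_of_ne_of_ne hj.ne (hj.trans hi).ne, coe_cycleRange_of_lt hj,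
      coe_cycleRange_of_lt (hj.trans hi)]
  · rw [Equiv.swap_apply_left, cycleRange_of_gt hi, coe_cycleRange_of_lt hi, val_castSucc, val_succ]
  · rcases (Fin.castSucc_lt_iff_succ_le.mp hj).eq_or_lt with rfl | hj'
    · rw [Equiv.swap_apply_right, cycleRange_self, cycleRange_self]
    · rw [Equiv.swap_apply_of_ne_of_ne hj.ne' hj'.ne', cycleRange_of_gt hj, cycleRange_of_gt hj']

lemma chainOpt_succ {α : Type} (g : ℕ → α → Option α) (m : ℕ) (a : α) :
    ChainOpt g (m + 1) a = (ChainOpt g m a).bind (g (m + 1)) := by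
  simp [ChainOpt, List.range_succ]

section TypeA

variable {n : ℕ}

lemma eps_BA (i : Fin (n + 1)) (x : Fin (n + 1) → ℕ) : (BA n).eps i x = x i :=
  sSup_optIter_transferOne_ne_none (i - 1) i x

lemma phi_BA (i : Fin (n + 1)) (x : Fin (n + 1) → ℕ) : (BA n).phi i x = x (i - 1) :=
  sSup_optIter_transferOne_ne_none i (i - 1) x

lemma S_BA (i : Fin (n + 1)) (x : Fin (n + 1) → ℕ) :
    (BA n).S i x = some (x ∘ Equiv.swap (i - 1) i) := by
  unfold PreCrystal.S
  rw [eps_BA, phi_BA]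
  split_ifs with h
  · change OptIter (transferOne i (i - 1)) _ x = _
    rw [optIter_transferOne, if_pos (Nat.sub_le _ _), transfer_eq_comp_swap h, Equiv.swap_comm]
  · change OptIter (transferOne (i - 1) i) _ x = _
    rw [optIter_transferOne, if_pos (Nat.sub_le _ _), transfer_eq_comp_swap (by omega)]

lemma shiftA_transfer (a b : Fin (n + 1)) (k : ℕ) (x : Fin (n + 1) → ℕ) :
    shiftA n (transfer a b k x) = transfer (a - 1) (b - 1) k (shiftA n x) := by
  funext j
  simp [shiftA, transfer, Function.update_apply, eq_sub_iff_add_eq]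

lemma map_shiftA_transferOne (a b : Fin (n + 1)) (x : Fin (n + 1) → ℕ) :
    (transferOne a b x).map (shiftA n) = transferOne (a - 1) (b - 1) (shiftA n x) := by
  have : shiftA n x (b - 1) = x b := by simp [shiftA]
  by_cases h : 0 < x b <;> simp [transferOne, this, h, shiftA_transfer]

lemma sum_shiftA (x : Fin (n + 1) → ℕ) : ∑ j, shiftA n x j = ∑ j, x j :=
  Equiv.sum_comp (Equiv.addRight 1) x

lemma bijOn_shiftA (l : ℕ) :
    Set.BijOn (shiftA n) {x | ∑ j, x j = l} {x | ∑ j, x j = l} :=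
  ((Equiv.addRight (1 : Fin (n + 1))).symm.arrowCongr (Equiv.refl ℕ)).bijOn
    fun x => (sum_shiftA x).congr_left

lemma shiftA_eq_comp_finRotate (x : Fin (n + 1) → ℕ) : shiftA n x = x ∘ finRotate (n + 1) :=
  funext fun j => congrArg x (finRotate_apply j).symm

lemma chainOpt_S_BA (x : (BA n).carrier) (k : Fin (n + 1)) :
    ChainOpt (fun j => (BA n).S (Fin.ofNat (n + 1) j)) k x = some (x ∘ k.cycleRange) := by
  induction k using Fin.induction with
  | zero => rw [Fin.cycleRange_zero]; rfl
  | succ i ih =>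
    have hi : Fin.ofNat (n + 1) (i + 1) = i.succ := by ext; simp
    have hsub : i.succ - 1 = i.castSucc := sub_eq_of_eq_add Fin.coeSucc_eq_succ.symm
    rw [Fin.val_succ, chainOpt_succ, ← Fin.val_castSucc, ih]
    change (BA n).S _ (x ∘ _) = _
    rw [Fin.val_castSucc, hi, S_BA,
      hsub, ← Fin.cycleRange_castSucc_mul_swap, Equiv.Perm.coe_mul]
    rfl

end TypeA

theorem stmt7_general (n l : ℕ) :
    (∀ x : Fin (n + 1) → ℕ, ∑ j, x j = l →
      ChainOpt (fun j => (BA n).S (Fin.ofNat (n + 1) (j : ℕ))) n x = some (shiftA n x)) ∧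
    Set.BijOn (shiftA n) {x : Fin (n + 1) → ℕ | ∑ j, x j = l}
      {x : Fin (n + 1) → ℕ | ∑ j, x j = l} ∧
    (∀ i : Fin (n + 1), ∀ x : Fin (n + 1) → ℕ, ∑ j, x j = l →
      Option.map (shiftA n) ((BA n).f i x) = (BA n).f (i - 1) (shiftA n x) ∧
      Option.map (shiftA n) ((BA n).e i x) = (BA n).e (i - 1) (shiftA n x)) := by
  refine ⟨fun x _ => ?_, bijOn_shiftA l, fun i x _ => ⟨?_, ?_⟩⟩
  · rw [shiftA_eq_comp_finRotate, ← Fin.cycleRange_last]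
    exact chainOpt_S_BA x (Fin.last n)
  · exact map_shiftA_transferOne i (i - 1) x
  · exact map_shiftA_transferOne (i - 1) i x

/-- Proposition 2.1 for type `A_n^{(1)}`: the composite `σ' = S_n ∘ ⋯ ∘ S_1` (with
`S_1` applied first) is, on `B_l`, the cyclic shift `σ'(x_1,…,x_{n+1}) =
(x_2,…,x_{n+1},x_1)`; the cyclic shift is a bijection of `B_l`; and for every
`i ∈ {0,…,n}` one has `σ' ∘ f̃_i = f̃_{σ(i)} ∘ σ'` and `σ' ∘ ẽ_i = ẽ_{σ(i)} ∘ σ'`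
as partial maps on `B_l`, where `σ(i) = i - 1 (mod n+1)`. -/
theorem stmt7 (n l : ℕ) (hn : 1 ≤ n) (hl : 1 ≤ l) :
    (∀ x : Fin (n + 1) → ℕ, ∑ j, x j = l →
      ChainOpt (fun j => (BA n).S (Fin.ofNat (n + 1) (j : ℕ))) n x = some (shiftA n x)) ∧
    Set.BijOn (shiftA n) {x : Fin (n + 1) → ℕ | ∑ j, x j = l}
      {x : Fin (n + 1) → ℕ | ∑ j, x j = l} ∧
    (∀ i : Fin (n + 1), ∀ x : Fin (n + 1) → ℕ, ∑ j, x j = l →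
      Option.map (shiftA n) ((BA n).f i x) = (BA n).f (i - 1) (shiftA n x) ∧
      Option.map (shiftA n) ((BA n).e i x) = (BA n).e (i - 1) (shiftA n x)) :=
  stmt7_general n l
end

section
/- Fix integers n ≥ 1, N ≥ 1 and l_1,…,l_N ≥ 1, set B = B_{l_1} ⊗ ⋯ ⊗ B_{l_N}, and for k ∈ ℤ let i_k be the unique element of {0,1,…,n} with i_k ≡ −k (mod n+1). There exists a constant C (depending only on n, l_1,…,l_N) such that for every M ≥ 1, every u = (u_1,…,u_{n+1}) ∈ B_M with u_{n+1} ≥ u_b + C for all 1 ≤ b ≤ n, and every x ∈ B, defining u^(k) ⊗ x^(k) = S_{i_k} S_{i_{k−1}} ⋯ S_{i_1}(u ⊗ x) in B_M ⊗ B (with S_{i_1} applied first), one has ε_{i_k}(u^(k)) = φ_{i_k}(u^(k−1) ⊗ x^(k−1)) for every 1 ≤ k ≤ n. -/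
/-! On `B_M` and on tensor products of such crystals, `ε_i` and `φ_i` are exact string
lengths, so `S_i` exchanges them, and on `u ⊗ x` the tensor rule reads
`ε_i(u ⊗ x) = ε_i(u) + (ε_i(x) - φ_i(u))⁺`, `φ_i(u ⊗ x) = φ_i(x) + (φ_i(u) - ε_i(x))⁺`.
The operators preserve the size of every factor of `x`, so `φ_i ≤ L = l_1 + ⋯ + l_N` on `B`.
If `ε_i(u) > L` and `S_i(u ⊗ x) = u' ⊗ x'`, then `φ_i(u' ⊗ x') = ε_i(u ⊗ x) > L ≥ φ_i(x')`
forces `φ_i(u') > ε_i(x')`; hence `ε_i(u') = ε_i(u' ⊗ x') = φ_i(u ⊗ x)`, and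
`φ_i(u') ≥ ε_i(u) - L`. On `B_M` we have `φ_{i_k} = ε_{i_{k+1}}` (both read the coordinate
`n + 1 - k`), so starting from `u_{n+1} > nL` the inequality `ε_{i_k} > L` survives all
`n` steps, losing at most `L` each time. -/

def IsIterLength {α : Type} (g : α → Option α) (d : α → ℕ) : Prop :=
  (∀ a, g a = none ↔ d a = 0) ∧ ∀ a b, g a = some b → d a = d b + 1

namespace IsIterLength

variable {α : Type} {g : α → Option α} {d : α → ℕ}

theorem exists_optIter_eq_some (h : IsIterLength g d) :
    ∀ {m a}, m ≤ d a → ∃ b, OptIter g m a = some b ∧ d b + m = d a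
  | 0, a, _ => ⟨a, rfl, rfl⟩
  | m + 1, a, hm => by
    obtain ⟨c, hc⟩ := Option.ne_none_iff_exists'.mp (mt (h.1 a).1 (by omega))
    have hac := h.2 a c hc
    obtain ⟨b, hb, hbc⟩ := h.exists_optIter_eq_some (m := m) (a := c) (by omega)
    exact ⟨b, by simp [OptIter, hc, hb], by omega⟩

theorem optIter_eq_none (h : IsIterLength g d) : ∀ {m a}, d a < m → OptIter g m a = none
  | m + 1, a, hm => by
    cases hc : g a with
    | none => simp [OptIter, hc]
    | some c =>
      have hac := h.2 a c hc
      simp [OptIter, hc, h.optIter_eq_none (show d c < m by omega)]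

theorem sSup_optIter_ne_none (h : IsIterLength g d) (a : α) :
    sSup {m | OptIter g m a ≠ none} = d a := by
  have hset : {m | OptIter g m a ≠ none} = Set.Iic (d a) := by
    ext m
    refine ⟨fun hm => not_lt.1 fun hlt => hm (h.optIter_eq_none hlt), fun hm => ?_⟩
    obtain ⟨b, hb, -⟩ := h.exists_optIter_eq_some hm
    simp [hb]
  rw [hset, csSup_Iic]

end IsIterLength

section OptIter

variable {α : Type} {g : α → Option α}

theorem optIter_induction (P : α → Prop) (hg : ∀ {a b}, g a = some b → P a → P b) :
    ∀ {m a b}, OptIter g m a = some b → P a → P b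
  | 0, _, _, hab, ha => Option.some.inj hab ▸ ha
  | m + 1, a, b, hab, ha => by
    cases hc : g a with
    | none => simp [OptIter, hc] at hab
    | some c =>
      simp only [OptIter, hc, Option.bind_some] at hab
      exact optIter_induction P hg hab (hg hc ha)

theorem eq_add_of_optIter_eq_some {d : α → ℕ} (hg : ∀ {a b}, g a = some b → d b = d a + 1) :
    ∀ {m a b}, OptIter g m a = some b → d b = d a + m
  | 0, _, _, hab => by simp [← Option.some.inj hab]
  | m + 1, a, b, hab => by
    cases hc : g a with
    | none => simp [OptIter, hc] at hab
    | some c =>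
      simp only [OptIter, hc, Option.bind_some] at hab
      rw [eq_add_of_optIter_eq_some hg hab, hg hc]
      ring

end OptIter

namespace PreCrystal

variable {n : ℕ} {C D : PreCrystal n}

structure Seminormal (C : PreCrystal n) where
  ε : Fin (n + 1) → C.carrier → ℕ
  φ : Fin (n + 1) → C.carrier → ℕ
  isIterLength_e : ∀ i, IsIterLength (C.e i) (ε i)
  isIterLength_f : ∀ i, IsIterLength (C.f i) (φ i)
  φ_e : ∀ {i a b}, C.e i a = some b → φ i b = φ i a + 1
  ε_f : ∀ {i a b}, C.f i a = some b → ε i b = ε i a + 1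

structure IsInvariant (C : PreCrystal n) (P : C.carrier → Prop) : Prop where
  e_mem : ∀ {i a b}, C.e i a = some b → P a → P b
  f_mem : ∀ {i a b}, C.f i a = some b → P a → P b

theorem IsInvariant.S_mem {P : C.carrier → Prop} (h : C.IsInvariant P) {i b b'}
    (hS : C.S i b = some b') (hb : P b) : P b' := by
  unfold S at hS
  split_ifs at hS
  · exact optIter_induction P h.f_mem hS hb
  · exact optIter_induction P h.e_mem hS hb

theorem tensor_e_eq_some {i : Fin (n + 1)} {p q : (C.tensor D).carrier}
    (h : (C.tensor D).e i p = some q) :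
    (D.eps i p.2 ≤ C.phi i p.1 ∧ C.e i p.1 = some q.1 ∧ q.2 = p.2) ∨
      (C.phi i p.1 < D.eps i p.2 ∧ q.1 = p.1 ∧ D.e i p.2 = some q.2) := by
  simp only [tensor] at h
  split_ifs at h with hc
  · obtain ⟨a, ha, rfl⟩ := Option.map_eq_some_iff.1 h
    exact Or.inl ⟨hc, ha, rfl⟩
  · obtain ⟨a, ha, rfl⟩ := Option.map_eq_some_iff.1 h
    exact Or.inr ⟨not_le.1 hc, rfl, ha⟩

theorem tensor_f_eq_some {i : Fin (n + 1)} {p q : (C.tensor D).carrier}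
    (h : (C.tensor D).f i p = some q) :
    (D.eps i p.2 < C.phi i p.1 ∧ C.f i p.1 = some q.1 ∧ q.2 = p.2) ∨
      (C.phi i p.1 ≤ D.eps i p.2 ∧ q.1 = p.1 ∧ D.f i p.2 = some q.2) := by
  simp only [tensor] at h
  split_ifs at h with hc
  · obtain ⟨a, ha, rfl⟩ := Option.map_eq_some_iff.1 h
    exact Or.inl ⟨hc, ha, rfl⟩
  · obtain ⟨a, ha, rfl⟩ := Option.map_eq_some_iff.1 h
    exact Or.inr ⟨not_lt.1 hc, rfl, ha⟩

theorem IsInvariant.tensor {P : C.carrier → Prop} {Q : D.carrier → Prop}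
    (hP : C.IsInvariant P) (hQ : D.IsInvariant Q) :
    (C.tensor D).IsInvariant (fun p => P p.1 ∧ Q p.2) where
  e_mem h hp := by
    rcases tensor_e_eq_some h with ⟨-, h1, h2⟩ | ⟨-, h1, h2⟩
    · exact ⟨hP.e_mem h1 hp.1, h2 ▸ hp.2⟩
    · exact ⟨h1 ▸ hp.1, hQ.e_mem h2 hp.2⟩
  f_mem h hp := by
    rcases tensor_f_eq_some h with ⟨-, h1, h2⟩ | ⟨-, h1, h2⟩
    · exact ⟨hP.f_mem h1 hp.1, h2 ▸ hp.2⟩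
    · exact ⟨h1 ▸ hp.1, hQ.f_mem h2 hp.2⟩

namespace Seminormal

variable (dC : C.Seminormal) (dD : D.Seminormal)

theorem eps_eq (i : Fin (n + 1)) (b : C.carrier) : C.eps i b = dC.ε i b :=
  (dC.isIterLength_e i).sSup_optIter_ne_none b

theorem phi_eq (i : Fin (n + 1)) (b : C.carrier) : C.phi i b = dC.φ i b :=
  (dC.isIterLength_f i).sSup_optIter_ne_none b

theorem S_eq_some (i : Fin (n + 1)) (b : C.carrier) :
    ∃ b', C.S i b = some b' ∧ dC.ε i b' = dC.φ i b ∧ dC.φ i b' = dC.ε i b := by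
  unfold S
  rw [dC.eps_eq, dC.phi_eq]
  split_ifs with h
  · obtain ⟨b', hb', hφ⟩ :=
      (dC.isIterLength_f i).exists_optIter_eq_some (m := dC.φ i b - dC.ε i b) (Nat.sub_le _ _)
    have hε := eq_add_of_optIter_eq_some dC.ε_f hb'
    exact ⟨b', hb', by omega, by omega⟩
  · obtain ⟨b', hb', hε⟩ :=
      (dC.isIterLength_e i).exists_optIter_eq_some (m := dC.ε i b - dC.φ i b) (Nat.sub_le _ _)
    have hφ := eq_add_of_optIter_eq_some dC.φ_e hb'
    exact ⟨b', hb', by omega, by omega⟩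

theorem tensor_strings_of_e_eq_some {i : Fin (n + 1)} {p q : C.carrier × D.carrier}
    (h : (C.tensor D).e i p = some q) :
    dC.ε i p.1 + (dD.ε i p.2 - dC.φ i p.1) = dC.ε i q.1 + (dD.ε i q.2 - dC.φ i q.1) + 1 ∧
      dD.φ i q.2 + (dC.φ i q.1 - dD.ε i q.2) = dD.φ i p.2 + (dC.φ i p.1 - dD.ε i p.2) + 1 := by
  rcases tensor_e_eq_some h with ⟨hc, h1, h2⟩ | ⟨hc, h1, h2⟩ <;> rw [dC.phi_eq, dD.eps_eq] at hc
  · have := (dC.isIterLength_e i).2 _ _ h1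
    have := dC.φ_e h1
    rw [h2]; omega
  · have := (dD.isIterLength_e i).2 _ _ h2
    have := dD.φ_e h2
    rw [h1]; omega

theorem tensor_strings_of_f_eq_some {i : Fin (n + 1)} {p q : C.carrier × D.carrier}
    (h : (C.tensor D).f i p = some q) :
    dD.φ i p.2 + (dC.φ i p.1 - dD.ε i p.2) = dD.φ i q.2 + (dC.φ i q.1 - dD.ε i q.2) + 1 ∧
      dC.ε i q.1 + (dD.ε i q.2 - dC.φ i q.1) = dC.ε i p.1 + (dD.ε i p.2 - dC.φ i p.1) + 1 := by
  rcases tensor_f_eq_some h with ⟨hc, h1, h2⟩ | ⟨hc, h1, h2⟩ <;> rw [dC.phi_eq, dD.eps_eq] at hc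
  · have := (dC.isIterLength_f i).2 _ _ h1
    have := dC.ε_f h1
    rw [h2]; omega
  · have := (dD.isIterLength_f i).2 _ _ h2
    have := dD.ε_f h2
    rw [h1]; omega

protected def tensor : (C.tensor D).Seminormal where
  ε i p := dC.ε i p.1 + (dD.ε i p.2 - dC.φ i p.1)
  φ i p := dD.φ i p.2 + (dC.φ i p.1 - dD.ε i p.2)
  isIterLength_e i := by
    refine ⟨fun p => ?_, fun _ _ h => (dC.tensor_strings_of_e_eq_some dD h).1⟩
    simp only [PreCrystal.tensor, dC.phi_eq, dD.eps_eq]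
    split_ifs <;>
      simp only [Option.map_eq_none_iff, (dC.isIterLength_e i).1, (dD.isIterLength_e i).1] <;>
      omega
  isIterLength_f i := by
    refine ⟨fun p => ?_, fun _ _ h => (dC.tensor_strings_of_f_eq_some dD h).1⟩
    simp only [PreCrystal.tensor, dC.phi_eq, dD.eps_eq]
    split_ifs <;>
      simp only [Option.map_eq_none_iff, (dC.isIterLength_f i).1, (dD.isIterLength_f i).1] <;>
      omega
  φ_e h := (dC.tensor_strings_of_e_eq_some dD h).2
  ε_f h := (dC.tensor_strings_of_f_eq_some dD h).2

theorem eps_fst_of_tensor_S_eq_some {i : Fin (n + 1)} {p q : (C.tensor D).carrier}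
    (hS : (C.tensor D).S i p = some q) (hq : dD.φ i q.2 < dC.ε i p.1) :
    C.eps i q.1 = (C.tensor D).phi i p ∧ dC.ε i p.1 ≤ dC.φ i q.1 + dD.φ i q.2 := by
  obtain ⟨q', hq', hε, hφ⟩ := (dC.tensor dD).S_eq_some i p
  obtain rfl : q' = q := Option.some.inj (hq'.symm.trans hS)
  rw [dC.eps_eq, (dC.tensor dD).phi_eq, ← hε]
  simp only [Seminormal.tensor] at hε hφ ⊢
  omega

end Seminormal

end PreCrystal

section TypeA

open Finset

variable {n : ℕ}

theorem Fin.sub_one_ne_self (hn : 1 ≤ n) (i : Fin (n + 1)) : i - 1 ≠ i := by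
  simp only [ne_eq, sub_eq_self, Fin.one_eq_zero_iff]
  omega

theorem sum_update_update_of_pos {x : Fin (n + 1) → ℕ} {a b : Fin (n + 1)} (hab : a ≠ b)
    (ha : 0 < x a) :
    ∑ j, Function.update (Function.update x b (x b + 1)) a (x a - 1) j = ∑ j, x j := by
  have hb : b ∈ univ.erase a := mem_erase.2 ⟨hab.symm, mem_univ b⟩
  have hrest : ∀ j ∈ (univ.erase a).erase b,
      Function.update (Function.update x b (x b + 1)) a (x a - 1) j = x j := fun j hj => by
    rw [Function.update_of_ne (ne_of_mem_erase (mem_of_mem_erase hj)),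
      Function.update_of_ne (ne_of_mem_erase hj)]
  rw [← add_sum_erase _ _ (mem_univ a), ← add_sum_erase _ _ (mem_univ a),
    ← add_sum_erase _ _ hb, ← add_sum_erase _ _ hb, sum_congr rfl hrest]
  simp only [Function.update_self, Function.update_of_ne hab.symm]
  obtain ⟨k, hk⟩ : ∃ k, x a = k + 1 := ⟨x a - 1, by omega⟩
  rw [hk, Nat.add_sub_cancel]
  ring

theorem eA_eq_some {i : Fin (n + 1)} {x y : Fin (n + 1) → ℕ} :
    eA n i x = some y ↔
      0 < x i ∧ Function.update (Function.update x (i - 1) (x (i - 1) + 1)) i (x i - 1) = y := by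
  simp [eA]

theorem fA_eq_some {i : Fin (n + 1)} {x y : Fin (n + 1) → ℕ} :
    fA n i x = some y ↔
      0 < x (i - 1) ∧
        Function.update (Function.update x i (x i + 1)) (i - 1) (x (i - 1) - 1) = y := by
  simp [fA]

def seminormalBA (hn : 1 ≤ n) : (BA n).Seminormal where
  ε i x := x i
  φ i x := x (i - 1)
  isIterLength_e i := ⟨fun x => by simp [BA, eA], fun x y h => by
    obtain ⟨hx, rfl⟩ := eA_eq_some.1 h
    simp only [Function.update_self]
    omega⟩
  isIterLength_f i := ⟨fun x => by simp [BA, fA], fun x y h => by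
    obtain ⟨hx, rfl⟩ := fA_eq_some.1 h
    simp only [Function.update_self]
    omega⟩
  φ_e h := by
    obtain ⟨-, rfl⟩ := eA_eq_some.1 h
    simp only [Function.update_of_ne (Fin.sub_one_ne_self hn _)]
    exact Function.update_self ..
  ε_f h := by
    obtain ⟨-, rfl⟩ := fA_eq_some.1 h
    simp only [Function.update_of_ne (Fin.sub_one_ne_self hn _).symm]
    exact Function.update_self ..

theorem isInvariant_sum_eq (hn : 1 ≤ n) (s : ℕ) : (BA n).IsInvariant (fun x => ∑ j, x j = s) where
  e_mem h hx := by
    obtain ⟨hpos, rfl⟩ := eA_eq_some.1 h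
    rwa [sum_update_update_of_pos (Fin.sub_one_ne_self hn _).symm hpos]
  f_mem h hx := by
    obtain ⟨hpos, rfl⟩ := fA_eq_some.1 h
    rwa [sum_update_update_of_pos (Fin.sub_one_ne_self hn _) hpos]

noncomputable def seminormalBPow (hn : 1 ≤ n) : (N : ℕ) → (BPow n N).Seminormal
  | 0 => seminormalBA hn
  | N + 1 => (seminormalBPow hn N).tensor (seminormalBA hn)

theorem isInvariant_memBPow (hn : 1 ≤ n) :
    ∀ (N : ℕ) (l : Fin (N + 1) → ℕ), (BPow n N).IsInvariant (memBPow n N l)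
  | 0, l => isInvariant_sum_eq hn (l 0)
  | N + 1, _ => (isInvariant_memBPow hn N _).tensor (isInvariant_sum_eq hn _)

theorem phi_le_sum_of_memBPow (hn : 1 ≤ n) (i : Fin (n + 1)) :
    ∀ (N : ℕ) (l : Fin (N + 1) → ℕ) (x : (BPow n N).carrier),
      memBPow n N l x → (seminormalBPow hn N).φ i x ≤ ∑ j, l j
  | 0, l, x, hx => by
    have hx : ∑ j, x j = l 0 := hx
    change x (i - 1) ≤ _
    rw [Fin.sum_univ_one, ← hx]
    exact single_le_sum (fun j _ => Nat.zero_le (x j)) (mem_univ (i - 1))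
  | N + 1, l, p, ⟨hp, hlast⟩ => by
    have h1 := phi_le_sum_of_memBPow hn i N _ p.1 hp
    have h2 : p.2 (i - 1) ≤ l (Fin.last (N + 1)) :=
      hlast ▸ single_le_sum (fun j _ => Nat.zero_le (p.2 j)) (mem_univ (i - 1))
    change p.2 (i - 1) + ((seminormalBPow hn N).φ i p.1 - p.2 i) ≤ _
    rw [Fin.sum_univ_castSucc]
    omega

theorem memBPow_tensorOf :
    ∀ (N : ℕ) (l : Fin (N + 1) → ℕ) (b : Fin (N + 1) → Fin (n + 1) → ℕ),
      (∀ j, ∑ i, b j i = l j) → memBPow n N l (tensorOf n N b)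
  | 0, _, _, hb => hb 0
  | N + 1, _, _, hb => ⟨memBPow_tensorOf N _ _ fun j => hb j.castSucc, hb (Fin.last (N + 1))⟩

theorem negIdx_add_one (k : ℤ) : negIdx n (k + 1) = negIdx n k - 1 := by
  refine eq_sub_of_add_eq (Fin.ext ?_)
  have h0 := Int.emod_nonneg (-(k + 1)) (by omega : ((n : ℤ) + 1) ≠ 0)
  have h1 := Int.emod_nonneg (-k) (by omega : ((n : ℤ) + 1) ≠ 0)
  rw [Fin.val_add, Fin.val_one']
  simp only [negIdx]
  zify [h0, h1]
  rw [Int.toNat_of_nonneg h0, Int.toNat_of_nonneg h1, Int.emod_add_emod, Int.add_emod_emod,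
    show -(k + 1) + 1 = -k by ring]

end TypeA

theorem negIdx_one {n : ℕ} : negIdx n 1 = Fin.last n := by
  rw [← zero_add (1 : ℤ), negIdx_add_one]
  exact Fin.ext (by simp [negIdx])

namespace PreCrystal

variable {n : ℕ}

/-- `getD` only matters where `S` is undefined, which never happens on a seminormal crystal. -/
noncomputable def weylOrbit (C : PreCrystal n) (idx : ℕ → Fin (n + 1)) (b : C.carrier) :
    ℕ → C.carrier
  | 0 => b
  | k + 1 => (C.S (idx (k + 1)) (C.weylOrbit idx b k)).getD (C.weylOrbit idx b k)

theorem weylOrbit_succ_of_S_eq_some {C : PreCrystal n} {idx : ℕ → Fin (n + 1)} {b b' : C.carrier}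
    {k : ℕ} (h : C.S (idx (k + 1)) (C.weylOrbit idx b k) = some b') :
    C.weylOrbit idx b (k + 1) = b' := by
  simp [weylOrbit, h]

end PreCrystal

section Orbit

variable {n N' : ℕ} {l : Fin (N' + 1) → ℕ}

theorem S_tensor_BPow_eq_some_of_sum_lt (hn : 1 ≤ n) {i : Fin (n + 1)}
    {p : ((BA n).tensor (BPow n N')).carrier} (hp : memBPow n N' l p.2) (hi : ∑ j, l j < p.1 i) :
    ∃ q, ((BA n).tensor (BPow n N')).S i p = some q ∧
      (BA n).eps i q.1 = ((BA n).tensor (BPow n N')).phi i p ∧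
      memBPow n N' l q.2 ∧ p.1 i ≤ q.1 (i - 1) + ∑ j, l j := by
  obtain ⟨q, hS, -, -⟩ := ((seminormalBA hn).tensor (seminormalBPow hn N')).S_eq_some i p
  have hq : memBPow n N' l q.2 :=
    (PreCrystal.IsInvariant.tensor (P := fun _ => True) ⟨fun _ _ => trivial, fun _ _ => trivial⟩
      (isInvariant_memBPow hn N' l)).S_mem hS ⟨trivial, hp⟩ |>.2
  have hφ := phi_le_sum_of_memBPow hn i N' l q.2 hq
  obtain ⟨heps, hle⟩ := (seminormalBA hn).eps_fst_of_tensor_S_eq_some (seminormalBPow hn N') hS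
    (lt_of_le_of_lt hφ hi)
  exact ⟨q, hS, heps, hq, le_trans hle (Nat.add_le_add_left hφ _)⟩

theorem weylOrbit_negIdx_bound (hn : 1 ≤ n) (u : Fin (n + 1) → ℕ) {x : (BPow n N').carrier}
    (hx : memBPow n N' l x) :
    ∀ k : ℕ, (k + 1) * ∑ j, l j < u (Fin.last n) →
      let w := ((BA n).tensor (BPow n N')).weylOrbit (fun k : ℕ => negIdx n k) (u, x)
      memBPow n N' l (w k).2 ∧ u (Fin.last n) ≤ (w k).1 (negIdx n ↑(k + 1)) + k * ∑ j, l j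
  | 0, _ => ⟨hx, by simp [PreCrystal.weylOrbit, negIdx_one]⟩
  | k + 1, hk => by
    dsimp only
    obtain ⟨hmem, hbound⟩ := weylOrbit_negIdx_bound hn u hx k
      (lt_of_le_of_lt (Nat.mul_le_mul_right _ k.succ.le_succ) hk)
    obtain ⟨q, hS, -, hq, hle⟩ :=
      S_tensor_BPow_eq_some_of_sum_lt hn (i := negIdx n ↑(k + 1)) hmem
        (by rw [Nat.succ_mul, Nat.succ_mul] at hk; omega)
    rw [PreCrystal.weylOrbit_succ_of_S_eq_some (idx := fun k : ℕ => negIdx n k) hS]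
    refine ⟨hq, ?_⟩
    rw [Nat.cast_succ (k + 1), negIdx_add_one, Nat.succ_mul]
    omega

end Orbit

/-- Lemma 3.3 for type `A_n^{(1)}`: for `B = B_{l_1} ⊗ ⋯ ⊗ B_{l_N}` (here `N = N'+1`)
there is a constant `C` such that for every `M ≥ 1`, every `u ∈ B_M` with
`u_{n+1} ≥ u_b + C` for all `1 ≤ b ≤ n` (membership in `B_M[a_0]`, `a_0 = n+1`), and
every `x = b_1 ⊗ ⋯ ⊗ b_N ∈ B`, setting
`u^{(k)} ⊗ x^{(k)} = S_{i_k} ⋯ S_{i_1}(u ⊗ x)` (the sequence `w`, `i_k ≡ -k (mod n+1)`),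
one has `ε_{i_k}(u^{(k)}) = φ_{i_k}(u^{(k-1)} ⊗ x^{(k-1)})` for `1 ≤ k ≤ n`. -/
theorem stmt12 (n N' : ℕ) (hn : 1 ≤ n) (l : Fin (N' + 1) → ℕ) :
    ∃ Cst : ℕ, ∀ M : ℕ, 1 ≤ M → ∀ u : Fin (n + 1) → ℕ, ∑ j, u j = M →
      (∀ j : Fin (n + 1), (j : ℕ) < n → u j + Cst ≤ u ⟨n, by omega⟩) →
      ∀ bf : Fin (N' + 1) → (Fin (n + 1) → ℕ), (∀ j, ∑ i, bf j i = l j) →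
      ∃ w : ℕ → ((Fin (n + 1) → ℕ) × (BPow n N').carrier),
        w 0 = (u, tensorOf n N' bf) ∧
        (∀ k, 1 ≤ k → k ≤ n →
          ((BA n).tensor (BPow n N')).S (negIdx n k) (w (k - 1)) = some (w k)) ∧
        (∀ k, 1 ≤ k → k ≤ n →
          (BA n).eps (negIdx n k) (w k).1
            = ((BA n).tensor (BPow n N')).phi (negIdx n k) (w (k - 1))) := by
  refine ⟨n * ∑ j, l j + 1, fun M _ u _ hdom bf hbf => ?_⟩
  have hu : n * ∑ j, l j < u (Fin.last n) := by
    have := hdom ⟨0, by omega⟩ hn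
    change _ ≤ u (Fin.last n) at this
    omega
  set w := ((BA n).tensor (BPow n N')).weylOrbit (fun k : ℕ => negIdx n k) (u, tensorOf n N' bf)
  have hstep : ∀ k, 1 ≤ k → k ≤ n →
      ((BA n).tensor (BPow n N')).S (negIdx n k) (w (k - 1)) = some (w k) ∧
        (BA n).eps (negIdx n k) (w k).1
          = ((BA n).tensor (BPow n N')).phi (negIdx n k) (w (k - 1)) := by
    rintro (_ | k) hk1 hkn
    · omega
    have hk : (k + 1) * ∑ j, l j < u (Fin.last n) :=
      lt_of_le_of_lt (Nat.mul_le_mul_right _ hkn) hu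
    obtain ⟨hmem, hbound⟩ := weylOrbit_negIdx_bound hn u (memBPow_tensorOf N' l bf hbf) k hk
    obtain ⟨q, hS, heps, -⟩ :=
      S_tensor_BPow_eq_some_of_sum_lt hn (i := negIdx n ↑(k + 1)) hmem
        (by rw [Nat.succ_mul] at hk; omega)
    have hw : w (k + 1) = q := PreCrystal.weylOrbit_succ_of_S_eq_some hS
    rw [Nat.add_sub_cancel, hw]
    exact ⟨hS, heps⟩
  exact ⟨w, rfl, fun k h1 h2 => (hstep k h1 h2).1, fun k h1 h2 => (hstep k h1 h2).2⟩
end
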